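/- arXiv:1512.07126 — 7 statements merged into one kernel-verified Lean document; each statement's English description precedes it below -/
import Mathlib

section
/- Let A ∈ ℝ^{m×n} be a generic matrix (every subset of at most n of its rows is linearly independent) and let C = {x ∈ ℝ^n : Ax ≤ 0}. If there exists a non-zero vector v ∈ C, then the interior of C is non-empty. -/
/-! Let `T` be the set of rows active at `v`, i.e. those with `A i ⬝ᵥ v = 0`. Since `v ≠ 0` is
orthogonal to all of them, genericity forces `|T| < n`; hence the rows in `T` are linearly
independent and some `w` has `A i ⬝ᵥ w = -1` for `i ∈ T`. For large `c` the point `c • v + w` then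
satisfies every inequality strictly, so it is an interior point of the cone. -/

open Pointwise

noncomputable section

/-- The set of lattice (integer) points in `ℝ^n`. -/
def lat (n : ℕ) : Set (Fin n → ℝ) := {x | ∀ j, ∃ z : ℤ, x j = (z : ℝ)}

/-- The polyhedron determined by the subsystem of `A x ≤ b` indexed by `I`. -/
def polyI {n m : ℕ} (A : Fin m → Fin n → ℝ) (b : Fin m → ℝ) (I : Set (Fin m)) :
    Set (Fin n → ℝ) := {x | ∀ i ∈ I, ∑ j, A i j * x j ≤ b i}

/-- The integer points of a set `S ⊆ ℝ^n`. -/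
def intPts {n : ℕ} (S : Set (Fin n → ℝ)) : Set (Fin n → ℝ) := S ∩ lat n

/-- `c` is a valid Helly-type bound for dimension `n` and `k` integer points:
any polyhedron with exactly `k` integer points has a subsystem of at most `c`
inequalities with exactly the same integer points. -/
def HellyBound (n k c : ℕ) : Prop :=
  ∀ (m : ℕ) (A : Fin m → Fin n → ℝ) (b : Fin m → ℝ),
    (intPts (polyI A b Set.univ)).Finite →
    (intPts (polyI A b Set.univ)).ncard = k →
    ∃ I : Finset (Fin m), I.card ≤ c ∧
      intPts (polyI A b (↑I : Set (Fin m))) = intPts (polyI A b Set.univ)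

/-- The quantity `c(n,k)`: the least valid Helly-type bound. -/
def cnk (n k : ℕ) : ℕ := sInf {c | HellyBound n k c}

/-- A set of points is in convex position if no point of it lies in the convex
hull of the others. -/
def ConvexPos {n : ℕ} (V : Set (Fin n → ℝ)) : Prop :=
  ∀ v ∈ V, v ∉ convexHull ℝ (V \ {v})

/-- `iconv V = conv(V) ∩ ℤ^n`. -/
def iconv {n : ℕ} (V : Set (Fin n → ℝ)) : Set (Fin n → ℝ) :=
  convexHull ℝ V ∩ lat n

/-- `ℓ(n,k)`: the smallest integer `s` such that every set `V ⊆ ℤ^n` in convex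
position with `|V| = s` satisfies `|iconv(V) \ V| ≥ k`. -/
def ellnk (n k : ℕ) : ℕ :=
  sInf {s | ∀ V : Set (Fin n → ℝ), V ⊆ lat n → ConvexPos V → V.Finite →
    V.ncard = s → k ≤ (iconv V \ V).ncard}

/-- The set of midpoints of `V` that are not in `V`. -/
def midpts {n : ℕ} (V : Set (Fin n → ℝ)) : Set (Fin n → ℝ) :=
  {p | ∃ x ∈ V, ∃ y ∈ V, p = (1/2 : ℝ) • (x + y)} \ V

/-- `μ_c(n,s)`: the minimum number of midpoints `|M(V)|` over all sets
`V ⊆ ℝ^n` in convex position with `|V| = s`. -/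
def muc (n s : ℕ) : ℕ :=
  sInf {m | ∃ V : Set (Fin n → ℝ), ConvexPos V ∧ V.Finite ∧ V.ncard = s ∧
    (midpts V).ncard = m}

/-- `α(n,k)`: the maximum cardinality of a set `V ⊆ ℤ^n` in convex position
with `|iconv(V) \ V| = k`. -/
def alphank (n k : ℕ) : ℕ :=
  sSup {m | ∃ V : Set (Fin n → ℝ), V ⊆ lat n ∧ ConvexPos V ∧ V.Finite ∧
    V.ncard = m ∧ (iconv V \ V).ncard = k}

/-- A system `A x ≤ b` is non-redundant if removing any single inequality
strictly increases the set of integer points. -/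
def NonRedundant {n m : ℕ} (A : Fin m → Fin n → ℝ) (b : Fin m → ℝ) : Prop :=
  ∀ i : Fin m,
    intPts (polyI A b Set.univ) ⊂ intPts (polyI A b ({i}ᶜ : Set (Fin m)))

/-- The set of lattice (integer) points in Euclidean space `ℝ^n`. -/
def latE (n : ℕ) : Set (EuclideanSpace ℝ (Fin n)) := {x | ∀ j, ∃ z : ℤ, x j = (z : ℝ)}

open Matrix Filter

section

variable {K ι n : Type*} [Field K] [Fintype n]

theorem LinearIndependent.exists_forall_dotProduct_eq [Fintype ι] {a : ι → n → K}
    (ha : LinearIndependent K a) (y : ι → K) : ∃ w, ∀ i, a i ⬝ᵥ w = y i := by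
  have hrange : LinearMap.range (of a).mulVecLin = ⊤ := by
    apply Submodule.eq_top_of_finrank_eq
    rw [← rank, LinearIndependent.rank_matrix (M := of a) ha, Module.finrank_fintype_fun_eq_card]
  obtain ⟨w, hw⟩ := LinearMap.range_eq_top.mp hrange y
  exact ⟨w, congr_fun hw⟩

theorem LinearIndependent.eq_zero_of_forall_dotProduct_eq_zero [Fintype ι] {a : ι → n → K}
    (ha : LinearIndependent K a) (hcard : Fintype.card ι = Fintype.card n) {v : n → K}
    (hv : ∀ i, a i ⬝ᵥ v = 0) : v = 0 := by
  have hspan := ha.span_eq_top_of_card_eq_finrank' (by simpa using hcard)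
  refine dotProduct_eq_zero v fun w => ?_
  have hw : w ∈ Submodule.span K (Set.range a) := hspan ▸ Submodule.mem_top
  induction hw using Submodule.span_induction with
  | mem x hx => obtain ⟨i, rfl⟩ := hx; rw [dotProduct_comm]; exact hv i
  | zero => simp
  | add x y _ _ hx hy => simp [dotProduct_add, hx, hy]
  | smul c x _ hx => simp [dotProduct_smul, hx]

theorem card_lt_of_forall_dotProduct_eq_zero {a : ι → n → K}
    (hgen : ∀ S : Finset ι, S.card ≤ Fintype.card n → LinearIndependent K (fun i : S => a i))
    {v : n → K} (hv : v ≠ 0) (T : Finset ι) (hT : ∀ i ∈ T, a i ⬝ᵥ v = 0) :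
    T.card < Fintype.card n := by
  by_contra! h
  obtain ⟨S, hST, hS⟩ := Finset.exists_subset_card_eq h
  exact hv <| (hgen S hS.le).eq_zero_of_forall_dotProduct_eq_zero (by simpa using hS)
    fun i => hT i (hST i.2)

end

section

variable {ι n : Type*} [Fintype ι] [Fintype n]

theorem mem_interior_setOf_forall_dotProduct_nonpos {a : ι → n → ℝ} {x : n → ℝ}
    (hx : ∀ i, a i ⬝ᵥ x < 0) : x ∈ interior {y | ∀ i, a i ⬝ᵥ y ≤ 0} := by
  have hopen : IsOpen {y : n → ℝ | ∀ i, a i ⬝ᵥ y < 0} := by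
    rw [Set.ofPred_forall]
    exact isOpen_iInter_of_finite fun i => isOpen_lt (by fun_prop) continuous_const
  exact interior_maximal (fun y hy i => (hy i).le) hopen hx

theorem interior_setOf_forall_dotProduct_nonpos_nonempty {a : ι → n → ℝ} {v : n → ℝ}
    (hv : ∀ i, a i ⬝ᵥ v ≤ 0) (T : Finset ι) (hT : ∀ i, a i ⬝ᵥ v = 0 → i ∈ T)
    (hind : LinearIndependent ℝ (fun i : T => a i)) :
    (interior {x | ∀ i, a i ⬝ᵥ x ≤ 0}).Nonempty := by
  obtain ⟨w, hw⟩ := hind.exists_forall_dotProduct_eq fun _ => -1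
  have hexp (i : ι) (c : ℝ) : a i ⬝ᵥ (c • v + w) = c * (a i ⬝ᵥ v) + a i ⬝ᵥ w := by
    rw [dotProduct_add, dotProduct_smul, smul_eq_mul]
  have hlarge (i : ι) : ∀ᶠ c : ℝ in atTop, a i ⬝ᵥ (c • v + w) < 0 := by
    simp only [hexp]
    by_cases hi : i ∈ T
    · filter_upwards [eventually_ge_atTop 0] with c hc
      rw [show a i ⬝ᵥ w = -1 from hw ⟨i, hi⟩]
      nlinarith [hv i]
    · have hneg : a i ⬝ᵥ v < 0 := (hv i).lt_of_ne fun h => hi (hT i h)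
      have htend := tendsto_atBot_add_const_right _ (a i ⬝ᵥ w)
        (tendsto_id.atTop_mul_const_of_neg hneg)
      exact htend.eventually (eventually_lt_atBot 0)
  obtain ⟨c, hc⟩ := (eventually_all.mpr hlarge).exists
  exact ⟨c • v + w, mem_interior_setOf_forall_dotProduct_nonpos hc⟩

end

/-- If `A` is generic (every subset of at most `n` rows is
linearly independent) and the cone `C = {x : A x ≤ 0}` contains a non-zero
vector, then `C` has non-empty interior. -/
theorem stmt0 {m n : ℕ} (A : Fin m → Fin n → ℝ)
    (hgen : ∀ S : Finset (Fin m), S.card ≤ n →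
      LinearIndependent ℝ (fun i : {i // i ∈ S} => A i.1))
    (v : Fin n → ℝ) (hv : v ≠ 0)
    (hvC : v ∈ {x : Fin n → ℝ | ∀ i, ∑ j, A i j * x j ≤ 0}) :
    (interior {x : Fin n → ℝ | ∀ i, ∑ j, A i j * x j ≤ 0}).Nonempty := by
  classical
  let T := Finset.univ.filter fun i => A i ⬝ᵥ v = 0
  have hT : T.card < n := by
    simpa using card_lt_of_forall_dotProduct_eq_zero (fun S hS => hgen S (by simpa using hS))
      hv T (by simp [T])
  exact interior_setOf_forall_dotProduct_nonpos_nonempty hvC T (by simp [T]) (hgen T hT.le)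
end
end

section
/- For every n ≥ 1 there exists a subset U ⊆ ℝ^n that is dense in ℝ^n and such that every finite subset {u_1, …, u_k} ⊆ U is linearly independent over ℚ; that is, there do not exist rational vectors q_1, …, q_k ∈ ℚ^n, not all zero, with q_1·u_1 + ⋯ + q_k·u_k = 0. -/
open Pointwise

noncomputable section

/-!
Fix a transcendental `x ∈ (-1, 1)` and give every pair (point, coordinate) its own exponent.
Perturbing coordinate `j` of a rational point `c` by `x ^ m / (t + 1)` gives points that
converge to `c` as `t → ∞`, so together they are dense; and a rational relation among all
coordinates of finitely many of them would be a nonzero rational polynomial vanishing at `x`.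
-/

open Polynomial Filter Topology

theorem Polynomial.linearIndependent_C_add_C_mul_X_pow {R ι : Type*} [CommRing R]
    [NoZeroDivisors R] {c r : ι → R} (hr : ∀ i, r i ≠ 0) {e : ι → ℕ} (he : Function.Injective e)
    (he0 : ∀ i, e i ≠ 0) :
    LinearIndependent R fun i => C (c i) + C (r i) * X ^ e i := by
  rw [linearIndependent_iff']
  intro s a hsum i hi
  have hcoeff := congrArg (coeff · (e i)) hsum
  simp only [finsetSum_coeff, coeff_smul, coeff_add, coeff_C, coeff_C_mul_X_pow, he0, if_false,
    zero_add, smul_eq_mul, mul_ite, mul_zero, coeff_zero] at hcoeff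
  rw [Finset.sum_eq_single_of_mem i hi (fun j _ hji => if_neg (he.ne hji.symm)), if_pos rfl]
    at hcoeff
  exact (mul_eq_zero.1 hcoeff).resolve_right (hr i)

theorem LinearIndependent.aeval_of_transcendental {R A ι : Type*} [CommRing R] [CommRing A]
    [Algebra R A] {p : ι → R[X]} (hp : LinearIndependent R p) {x : A} (hx : Transcendental R x) :
    LinearIndependent R fun i => aeval x (p i) :=
  hp.map' (aeval x).toLinearMap (LinearMap.ker_eq_bot.2 (transcendental_iff_injective.1 hx))

theorem exists_transcendental_mem_Ioo {a b : ℝ} (hab : a < b) :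
    ∃ x, Transcendental ℚ x ∧ x ∈ Set.Ioo a b :=
  ((Algebraic.countable ℚ ℝ).dense_compl ℝ).exists_between hab

theorem LinearIndependent.uncurry_of_injective_of_mem_range {R M α κ ι : Type*} [Semiring R]
    [AddCommMonoid M] [Module R M] {g : κ × ι → M} (hg : LinearIndependent R g)
    {u : α → ι → M} (hu : Function.Injective u) (hmem : ∀ a, u a ∈ Set.range (Function.curry g)) :
    LinearIndependent R fun p : α × ι => u p.1 p.2 := by
  choose m hm using hmem
  have hm_inj : Function.Injective m := fun a b hab => hu (by rw [← hm a, ← hm b, hab])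
  convert hg.comp _ (hm_inj.prodMap Function.injective_id) using 1
  ext ⟨a, i⟩
  exact (congrFun (hm a) i).symm

section PerturbedRatPoint

variable {ι : Type*}

def perturbedRatPoint (x : ℝ) (e : ((ι → ℚ) × ℕ) × ι → ℕ) (p : (ι → ℚ) × ℕ) : ι → ℝ :=
  fun j => p.1 j + x ^ (e (p, j) + 1) / (p.2 + 1)

theorem linearIndependent_perturbedRatPoint {x : ℝ} (hx : Transcendental ℚ x)
    {e : ((ι → ℚ) × ℕ) × ι → ℕ} (he : Function.Injective e) :
    LinearIndependent ℚ fun p : ((ι → ℚ) × ℕ) × ι => perturbedRatPoint x e p.1 p.2 := by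
  have hpoly := linearIndependent_C_add_C_mul_X_pow (c := fun p => p.1.1 p.2)
    (r := fun p => ((p.1.2 : ℚ) + 1)⁻¹) (fun p => by positivity) (e := fun p => e p + 1)
    (fun p q hpq => he (Nat.succ_injective hpq)) (fun p => Nat.succ_ne_zero _)
  have hpoint : (fun p : ((ι → ℚ) × ℕ) × ι => perturbedRatPoint x e p.1 p.2) =
      fun p => aeval x (C (p.1.1 p.2) + C ((p.1.2 : ℚ) + 1)⁻¹ * X ^ (e p + 1)) := by
    ext p
    simp [perturbedRatPoint, div_eq_inv_mul]
  rw [hpoint]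
  exact hpoly.aeval_of_transcendental hx

variable [Fintype ι]

theorem dist_perturbedRatPoint_le {x : ℝ} (hx : |x| ≤ 1) (e : ((ι → ℚ) × ℕ) × ι → ℕ)
    (c : ι → ℚ) (t : ℕ) :
    dist (perturbedRatPoint x e (c, t)) (fun j => (c j : ℝ)) ≤ 1 / (t + 1) := by
  refine (dist_pi_le_iff (by positivity)).2 fun j => ?_
  rw [Real.dist_eq, perturbedRatPoint, add_sub_cancel_left, abs_div, abs_pow,
    abs_of_pos (by positivity : (0 : ℝ) < t + 1)]
  gcongr
  exact pow_le_one₀ (abs_nonneg x) hx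

theorem denseRange_perturbedRatPoint {x : ℝ} (hx : |x| ≤ 1) (e : ((ι → ℚ) × ℕ) × ι → ℕ) :
    DenseRange (perturbedRatPoint x e) := by
  have hrat : DenseRange (Pi.map fun (_ : ι) (q : ℚ) => (q : ℝ)) :=
    DenseRange.piMap fun _ => Rat.denseRange_cast
  refine Dense.of_closure (hrat.mono ?_)
  rintro _ ⟨c, rfl⟩
  refine mem_closure_of_tendsto (f := fun t : ℕ => perturbedRatPoint x e (c, t)) (b := atTop) ?_
    (Eventually.of_forall fun t => Set.mem_range_self _)
  exact tendsto_iff_dist_tendsto_zero.2 (squeeze_zero (fun _ => dist_nonneg)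
    (dist_perturbedRatPoint_le hx e c) tendsto_one_div_add_atTop_nhds_zero_nat)

end PerturbedRatPoint

theorem stmt1_general (n : ℕ) :
    ∃ U : Set (Fin n → ℝ), Dense U ∧
      ∀ (k : ℕ) (u : Fin k → Fin n → ℝ), Function.Injective u →
        (∀ i, u i ∈ U) →
        ∀ q : Fin k → Fin n → ℚ,
          (∑ i, ∑ j, (q i j : ℝ) * u i j) = 0 → ∀ i, q i = 0 := by
  obtain ⟨x, hx, hx_mem⟩ := exists_transcendental_mem_Ioo (neg_one_lt_zero.trans one_pos)
  obtain ⟨e, he⟩ := exists_injective_nat (((Fin n → ℚ) × ℕ) × Fin n)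
  refine ⟨Set.range (perturbedRatPoint x e),
    denseRange_perturbedRatPoint (abs_le.2 ⟨hx_mem.1.le, hx_mem.2.le⟩) e, ?_⟩
  intro k u hu hU q hq
  have hind := (linearIndependent_perturbedRatPoint hx he).uncurry_of_injective_of_mem_range hu hU
  have hq_zero := Fintype.linearIndependent_iff.1 hind (fun p => q p.1 p.2)
    (by simpa [Fintype.sum_prod_type, Rat.smul_def] using hq)
  exact fun i => funext fun j => hq_zero (i, j)

/-- There is a dense subset `U ⊆ ℝ^n` such that every finite
collection of distinct elements of `U` is linearly independent over `ℚ`, in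
the sense that the only rational vectors `q_1, …, q_k` with
`q_1·u_1 + ⋯ + q_k·u_k = 0` are all zero. -/
theorem stmt1 (n : ℕ) (hn : 1 ≤ n) :
    ∃ U : Set (Fin n → ℝ), Dense U ∧
      ∀ (k : ℕ) (u : Fin k → Fin n → ℝ), Function.Injective u →
        (∀ i, u i ∈ U) →
        ∀ q : Fin k → Fin n → ℚ,
          (∑ i, ∑ j, (q i j : ℝ) * u i j) = 0 → ∀ i, q i = 0 :=
  stmt1_general n
end
end

section
/- For all integers k ≥ 1 and n ≥ 1, c(n,k) ≥ c(n,k−1) − 1. -/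
open Pointwise

noncomputable section

/-!
Systems of inequalities are treated as finite sets of rows. Let `r = c(n,k-1) ≥ 1`. Since `r - 1`
is not a valid bound, some system with `k - 1` lattice points has an irredundant subsystem `K` with
at least `r` rows. Fix a row `i ∈ K`. Adding a bounding box and two rows along the face of `i`
gives a system with exactly one more lattice point `z`, and every row of `K \ {i}` is still
essential in it. Hence `c(n,k) ≥ |K| - 1 ≥ r - 1`. That `c(n,k)` is finite at all follows from the
finiteness of `c(n,k-1)`: cut off one lattice point at a time.
-/

namespace HellyBound

-- A row `(a, β)` stands for the inequality `a ⬝ᵥ x ≤ β`.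
abbrev Ineq (n : ℕ) := (Fin n → ℝ) × ℝ

variable {n : ℕ}

def polyhedron (H : Finset (Ineq n)) : Set (Fin n → ℝ) := {x | ∀ g ∈ H, g.1 ⬝ᵥ x ≤ g.2}

lemma polyhedron_anti {H H' : Finset (Ineq n)} (h : H ⊆ H') : polyhedron H' ⊆ polyhedron H :=
  fun _ hx g hg => hx g (h hg)

lemma mem_polyhedron_insert {g : Ineq n} {H : Finset (Ineq n)} {x : Fin n → ℝ} :
    x ∈ polyhedron (insert g H) ↔ g.1 ⬝ᵥ x ≤ g.2 ∧ x ∈ polyhedron H :=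
  Finset.forall_mem_insert _ _ _

lemma mem_polyhedron_union {H H' : Finset (Ineq n)} {x : Fin n → ℝ} :
    x ∈ polyhedron (H ∪ H') ↔ x ∈ polyhedron H ∧ x ∈ polyhedron H' :=
  Finset.forall_mem_union

lemma intPts_mono {S T : Set (Fin n → ℝ)} (h : S ⊆ T) : intPts S ⊆ intPts T :=
  Set.inter_subset_inter_left _ h

lemma intPts_polyhedron_insert (g : Ineq n) (H : Finset (Ineq n)) :
    intPts (polyhedron (insert g H)) = {x ∈ intPts (polyhedron H) | g.1 ⬝ᵥ x ≤ g.2} := by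
  ext x
  simp only [intPts, Set.mem_inter_iff, mem_polyhedron_insert, Set.mem_ofPred_eq]
  tauto

lemma polyI_eq_polyhedron {m : ℕ} (A : Fin m → Fin n → ℝ) (b : Fin m → ℝ) (I : Finset (Fin m)) :
    polyI A b I = polyhedron (I.image fun i => (A i, b i)) := by
  ext x
  simp [polyI, polyhedron, dotProduct]

lemma polyI_univ_eq_polyhedron {m : ℕ} (A : Fin m → Fin n → ℝ) (b : Fin m → ℝ) :
    polyI A b Set.univ = polyhedron (Finset.univ.image fun i => (A i, b i)) := by
  rw [← polyI_eq_polyhedron, Finset.coe_univ]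

lemma one_le_abs_sub_of_ne {a b : ℝ} (ha : ∃ z : ℤ, a = z) (hb : ∃ z : ℤ, b = z) (h : a ≠ b) :
    1 ≤ |a - b| := by
  obtain ⟨p, rfl⟩ := ha
  obtain ⟨q, rfl⟩ := hb
  have : p ≠ q := by exact_mod_cast h
  rw [← Int.cast_sub, ← Int.cast_abs]
  exact_mod_cast Int.one_le_abs (sub_ne_zero.2 this)

lemma eq_of_forall_abs_sub_lt_one {x y : Fin n → ℝ} (hx : x ∈ lat n) (hy : y ∈ lat n)
    (h : ∀ l, |x l - y l| < 1) : x = y :=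
  funext fun l => by_contra fun hne => (h l).not_ge (one_le_abs_sub_of_ne (hx l) (hy l) hne)

lemma one_le_dotProduct_sub_self {x y : Fin n → ℝ} (hx : x ∈ lat n) (hy : y ∈ lat n)
    (h : x ≠ y) : 1 ≤ (x - y) ⬝ᵥ (x - y) := by
  obtain ⟨l, hl⟩ := Function.ne_iff.1 h
  calc (1 : ℝ) ≤ (x l - y l) * (x l - y l) := by
        rw [← sq, one_le_sq_iff_one_le_abs]; exact one_le_abs_sub_of_ne (hx l) (hy l) hl
    _ ≤ (x - y) ⬝ᵥ (x - y) :=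
        Finset.single_le_sum (f := fun j => (x j - y j) * (x j - y j))
          (fun j _ => mul_self_nonneg _) (Finset.mem_univ l)

-- `‖x - y‖² = ‖x - z‖² + 2 (z - y) ⬝ᵥ (x - z) + ‖z - y‖²`, and `‖x - z‖² ≥ 1` on the lattice.
lemma dotProduct_le_of_farthest {x y z : Fin n → ℝ} (hx : x ∈ lat n) (hz : z ∈ lat n)
    (hne : x ≠ z) (hfar : (x - y) ⬝ᵥ (x - y) ≤ (z - y) ⬝ᵥ (z - y)) :
    (z - y) ⬝ᵥ x ≤ (z - y) ⬝ᵥ z - 1 / 2 := by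
  have h1 := one_le_dotProduct_sub_self hx hz hne
  have hxy : x - y = (x - z) + (z - y) := by abel
  rw [hxy, add_dotProduct, dotProduct_add, dotProduct_add, dotProduct_comm (x - z) (z - y)] at hfar
  have : (z - y) ⬝ᵥ x - (z - y) ⬝ᵥ z = (z - y) ⬝ᵥ (x - z) := (dotProduct_sub _ _ _).symm
  linarith

lemma finite_lat_inter_box (C : ℝ) : {x | x ∈ lat n ∧ ∀ l, |x l| ≤ C}.Finite := by
  refine ((Set.finite_Icc (fun _ : Fin n => -⌈C⌉) fun _ => ⌈C⌉).image
    fun ξ l => (ξ l : ℝ)).subset ?_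
  rintro x ⟨hx, hC⟩
  choose ξ hξ using hx
  have h l := abs_le.1 ((hξ l) ▸ hC l)
  refine ⟨ξ, ⟨fun l => ?_, fun l => ?_⟩, funext fun l => (hξ l).symm⟩
  · have : (-⌈C⌉ : ℝ) ≤ ξ l := by linarith [Int.le_ceil C, (h l).1]
    exact_mod_cast this
  · have : (ξ l : ℝ) ≤ ⌈C⌉ := (h l).2.trans (Int.le_ceil C)
    exact_mod_cast this

end HellyBound

open HellyBound in
theorem hellyBound_iff {n k c : ℕ} : HellyBound n k c ↔ ∀ H : Finset (Ineq n),
    (intPts (polyhedron H)).Finite → (intPts (polyhedron H)).ncard = k →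
    ∃ H' ⊆ H, H'.card ≤ c ∧ intPts (polyhedron H') = intPts (polyhedron H) := by
  classical
  constructor
  · intro hc H hfin hcard
    set e := H.equivFin.symm
    have hH : Finset.univ.image (fun i => ((e i).1.1, (e i).1.2)) = H := by
      ext g
      simp only [Finset.mem_image, Finset.mem_univ, true_and]
      exact ⟨by rintro ⟨i, rfl⟩; exact (e i).2, fun hg => ⟨e.symm ⟨g, hg⟩, by simp⟩⟩
    rw [← hH, ← polyI_univ_eq_polyhedron] at hfin hcard
    obtain ⟨I, hIc, hI⟩ := hc _ _ _ hfin hcard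
    refine ⟨I.image fun i => ((e i).1.1, (e i).1.2), ?_, Finset.card_image_le.trans hIc, ?_⟩
    · intro g hg
      obtain ⟨i, -, rfl⟩ := Finset.mem_image.1 hg
      exact (e i).2
    · rw [← polyI_eq_polyhedron, hI, polyI_univ_eq_polyhedron, hH]
  · intro hc m A b hfin hcard
    rw [polyI_univ_eq_polyhedron] at hfin hcard ⊢
    obtain ⟨H', hH', hH'c, hH'eq⟩ := hc _ hfin hcard
    obtain ⟨u, hu, hinj⟩ := Set.exists_image_eq_injOn_of_subset_range (f := fun i => (A i, b i))
      (t := ↑H') (fun g hg => by simpa using hH' hg)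
    have hI : u.toFinset.image (fun i => (A i, b i)) = H' := by
      rw [← Finset.coe_inj, Finset.coe_image, Set.coe_toFinset, hu]
    refine ⟨u.toFinset, ?_, ?_⟩
    · rw [← Finset.card_image_of_injOn (by simpa using hinj), hI]; exact hH'c
    · rw [polyI_eq_polyhedron, hI, hH'eq]

namespace HellyBound

variable {n k r c : ℕ}

def boxIneqs (lo hi : Fin n → ℝ) : Finset (Ineq n) :=
  Finset.univ.image (fun l => (Pi.single l 1, hi l)) ∪
    Finset.univ.image (fun l => (-Pi.single l 1, -lo l))

lemma forall_mem_boxIneqs {lo hi : Fin n → ℝ} {P : Ineq n → Prop} :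
    (∀ g ∈ boxIneqs lo hi, P g) ↔ ∀ l, P (Pi.single l 1, hi l) ∧ P (-Pi.single l 1, -lo l) := by
  simp only [boxIneqs, Finset.forall_mem_union, Finset.forall_mem_image, Finset.mem_univ,
    forall_const, forall_and]

lemma mem_polyhedron_boxIneqs {lo hi x : Fin n → ℝ} :
    x ∈ polyhedron (boxIneqs lo hi) ↔ ∀ l, lo l ≤ x l ∧ x l ≤ hi l := by
  simp only [polyhedron, Set.mem_ofPred_eq, forall_mem_boxIneqs, neg_dotProduct,
    single_one_dotProduct, neg_le_neg_iff]
  exact forall_congr' fun _ => And.comm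

lemma card_boxIneqs_le (lo hi : Fin n → ℝ) : (boxIneqs lo hi).card ≤ 2 * n := by
  refine (Finset.card_union_le _ _).trans ?_
  have h := fun f : Fin n → Ineq n => (Finset.card_image_le (s := Finset.univ) (f := f)).trans
    (Finset.card_fin n).le
  linarith [h fun l => (Pi.single l 1, hi l), h fun l => (-Pi.single l 1, -lo l)]

-- A lattice point satisfying some cut `g` is caught by the subsystem certifying `insert g H`.
lemma exists_subset_of_cuts (hr : HellyBound n k r) {H cuts : Finset (Ineq n)}
    (hcut : ∀ g ∈ cuts, (intPts (polyhedron (insert g H))).Finite ∧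
      (intPts (polyhedron (insert g H))).ncard = k)
    (hcover : ∀ x ∈ lat n, (∀ g ∈ cuts, g.2 < g.1 ⬝ᵥ x) → x ∈ polyhedron H) :
    ∃ H' ⊆ H, H'.card ≤ cuts.card * r ∧ intPts (polyhedron H') = intPts (polyhedron H) := by
  classical
  choose! S hSsub hScard hSeq using fun g hg => hellyBound_iff.1 hr _ (hcut g hg).1 (hcut g hg).2
  have hsub : cuts.biUnion (fun g => S g ∩ H) ⊆ H :=
    Finset.biUnion_subset.2 fun _ _ => Finset.inter_subset_right
  refine ⟨_, hsub, ?_, (intPts_mono (polyhedron_anti hsub)).antisymm' ?_⟩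
  · calc _ ≤ ∑ g ∈ cuts, (S g ∩ H).card := Finset.card_biUnion_le
      _ ≤ ∑ _g ∈ cuts, r := Finset.sum_le_sum fun g hg =>
          (Finset.card_le_card Finset.inter_subset_left).trans (hScard g hg)
      _ = cuts.card * r := by rw [Finset.sum_const, smul_eq_mul]
  rintro x ⟨hx, hxlat⟩
  by_cases hsat : ∃ g ∈ cuts, g.1 ⬝ᵥ x ≤ g.2
  · obtain ⟨g, hg, hgx⟩ := hsat
    have hxS : x ∈ intPts (polyhedron (S g)) := by
      refine ⟨fun h hh => ?_, hxlat⟩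
      rcases Finset.mem_insert.1 (hSsub g hg hh) with rfl | hhH
      · exact hgx
      · exact hx h (Finset.mem_biUnion.2 ⟨g, hg, Finset.mem_inter.2 ⟨hh, hhH⟩⟩)
    rw [hSeq g hg, intPts_polyhedron_insert] at hxS
    exact hxS.1
  · simp only [not_exists, not_and, not_le] at hsat
    exact ⟨hcover x hxlat hsat, hxlat⟩

lemma one_of_zero (hr : HellyBound n 0 r) : HellyBound n 1 (2 * n * r) := by
  rw [hellyBound_iff]
  intro H _ hcard
  obtain ⟨z, hz⟩ := Set.ncard_eq_one.1 hcard
  have hzlat : z ∈ lat n := (hz ▸ Set.mem_singleton z : z ∈ intPts (polyhedron H)).2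
  have hcut : ∀ g : Ineq n, g.2 < g.1 ⬝ᵥ z → intPts (polyhedron (insert g H)) = ∅ := by
    intro g hg
    rw [intPts_polyhedron_insert, hz]
    exact Set.eq_empty_of_forall_notMem fun x ⟨hx, hgx⟩ => (hgx.trans_lt (hx ▸ hg)).false
  -- the cuts `x l ≤ z l - 1` and `x l ≥ z l + 1`, violated only by `z` among lattice points
  obtain ⟨H', hH', hcardH', heq⟩ :=
    hr.exists_subset_of_cuts (H := H) (cuts := boxIneqs (z + 1) (z - 1))
    (fun g hg => by
      rw [hcut g ((forall_mem_boxIneqs (P := fun g => g.2 < g.1 ⬝ᵥ z)).2 (fun l => ?_) g hg)]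
      · exact ⟨Set.finite_empty, Set.ncard_empty _⟩
      simp)
    (fun x hx hviol => by
      have hxz : x = z := eq_of_forall_abs_sub_lt_one hx hzlat fun l => by
        have := forall_mem_boxIneqs.1 hviol l
        simp only [single_one_dotProduct, neg_dotProduct, Pi.add_apply, Pi.sub_apply,
          Pi.one_apply] at this
        rw [abs_sub_lt_iff]; constructor <;> linarith
      exact (hxz ▸ (hz ▸ Set.mem_singleton z : z ∈ intPts (polyhedron H))).1)
  exact ⟨H', hH', hcardH'.trans (Nat.mul_le_mul_right _ (card_boxIneqs_le _ _)), heq⟩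

lemma intPts_insert_cut_farthest {H : Finset (Ineq n)} {y z : Fin n → ℝ}
    (hz : z ∈ intPts (polyhedron H))
    (hfar : ∀ x ∈ intPts (polyhedron H), (x - y) ⬝ᵥ (x - y) ≤ (z - y) ⬝ᵥ (z - y)) :
    intPts (polyhedron (insert (z - y, (z - y) ⬝ᵥ z - 1 / 2) H)) = intPts (polyhedron H) \ {z} := by
  rw [intPts_polyhedron_insert]
  ext x
  simp only [Set.mem_ofPred_eq, Set.mem_sdiff, Set.mem_singleton_iff, and_congr_right_iff]
  intro hx
  refine ⟨fun hcut hxz => ?_, fun hxz => dotProduct_le_of_farthest hx.2 hz.2 hxz (hfar x hx)⟩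
  subst hxz
  linarith

/-- Cut off the two ends of a diameter of the lattice points. -/
lemma two_mul_of_pred (hr : HellyBound n (k - 1) r) (hk : 2 ≤ k) : HellyBound n k (2 * r) := by
  rw [hellyBound_iff]
  intro H hfin hcard
  set F := intPts (polyhedron H)
  obtain ⟨a, b, ha, hb, hab⟩ := Set.one_lt_ncard_iff hfin |>.1 (by omega)
  obtain ⟨⟨z, z'⟩, ⟨hz, hz'⟩, hmax⟩ := Set.exists_max_image (F ×ˢ F)
    (fun p => (p.1 - p.2) ⬝ᵥ (p.1 - p.2)) (hfin.prod hfin) ⟨(a, b), ha, hb⟩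
  have hfar x (hx : x ∈ F) y (hy : y ∈ F) : (x - y) ⬝ᵥ (x - y) ≤ (z - z') ⬝ᵥ (z - z') :=
    hmax (x, y) ⟨hx, hy⟩
  have hdiam : 1 ≤ (z - z') ⬝ᵥ (z - z') :=
    (one_le_dotProduct_sub_self ha.2 hb.2 hab).trans (hfar a ha b hb)
  have hsymm : (z' - z) ⬝ᵥ (z' - z) = (z - z') ⬝ᵥ (z - z') := by
    rw [← neg_sub, neg_dotProduct, dotProduct_neg, neg_neg]
  have hcut (w y : Fin n → ℝ) (hw : w ∈ F)
      (hfar' : ∀ x ∈ F, (x - y) ⬝ᵥ (x - y) ≤ (w - y) ⬝ᵥ (w - y)) :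
      (intPts (polyhedron (insert (w - y, (w - y) ⬝ᵥ w - 1 / 2) H))).Finite ∧
        (intPts (polyhedron (insert (w - y, (w - y) ⬝ᵥ w - 1 / 2) H))).ncard = k - 1 := by
    rw [intPts_insert_cut_farthest hw hfar', Set.ncard_sdiff_singleton_of_mem hw, hcard]
    exact ⟨hfin.sdiff, rfl⟩
  obtain ⟨H', hH', hcardH', heq⟩ := hr.exists_subset_of_cuts (H := H)
    (cuts := {(z - z', (z - z') ⬝ᵥ z - 1 / 2), (z' - z, (z' - z) ⬝ᵥ z' - 1 / 2)})
    (by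
      simp only [Finset.forall_mem_insert, Finset.mem_singleton, forall_eq]
      exact ⟨hcut z z' hz fun x hx => hfar x hx z' hz',
        hcut z' z hz' fun x hx => hsymm ▸ hfar x hx z hz⟩)
    (fun x _ hviol => by
      simp only [Finset.forall_mem_insert, Finset.mem_singleton, forall_eq] at hviol
      have h1 : (z' - z) ⬝ᵥ x = -((z - z') ⬝ᵥ x) := by rw [← neg_sub, neg_dotProduct]
      have h2 : (z' - z) ⬝ᵥ z' = -((z - z') ⬝ᵥ z') := by rw [← neg_sub, neg_dotProduct]
      have h3 : (z - z') ⬝ᵥ (z - z') = (z - z') ⬝ᵥ z - (z - z') ⬝ᵥ z' := dotProduct_sub _ _ _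
      linarith [hviol.1, hviol.2])
  exact ⟨H', hH', hcardH'.trans (Nat.mul_le_mul_right _ (Finset.card_le_two)), heq⟩

def Irredundant (K : Finset (Ineq n)) : Prop :=
  ∀ g ∈ K, ∃ y ∈ intPts (polyhedron (K.erase g)), g.2 < g.1 ⬝ᵥ y

lemma lt_of_mem_polyhedron_erase {K : Finset (Ineq n)} {g : Ineq n} {x : Fin n → ℝ}
    (hx : x ∈ polyhedron (K.erase g)) (hxK : x ∉ polyhedron K) : g.2 < g.1 ⬝ᵥ x := by
  by_contra hle
  exact hxK fun h hh =>
    if hhg : h = g then hhg ▸ not_lt.1 hle else hx h (Finset.mem_erase.2 ⟨hhg, hh⟩)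

lemma exists_irredundant_subset (H : Finset (Ineq n)) :
    ∃ K ⊆ H, intPts (polyhedron K) = intPts (polyhedron H) ∧ Irredundant K := by
  classical
  obtain ⟨K, hK, hmin⟩ := (H.powerset.filter fun K => intPts (polyhedron K) = intPts (polyhedron H))
    |>.exists_min_image Finset.card ⟨H, by simp⟩
  simp only [Finset.mem_filter, Finset.mem_powerset] at hK hmin
  refine ⟨K, hK.1, hK.2, fun g hg => ?_⟩
  have hne : intPts (polyhedron (K.erase g)) ≠ intPts (polyhedron H) := fun heq => by
    have := hmin _ ⟨(Finset.erase_subset g K).trans hK.1, heq⟩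
    rw [Finset.card_erase_of_mem hg] at this
    have := Finset.card_pos.2 ⟨g, hg⟩
    omega
  rw [← hK.2] at hne
  obtain ⟨y, hy, hyK⟩ := Set.exists_of_ssubset
    ((intPts_mono (polyhedron_anti (Finset.erase_subset g K))).ssubset_of_ne hne.symm)
  exact ⟨y, hy, lt_of_mem_polyhedron_erase hy.1 fun h => hyK ⟨h, hy.2⟩⟩

lemma card_le_of_forall_essential (hc : HellyBound n k c) {W S : Finset (Ineq n)}
    (hfin : (intPts (polyhedron W)).Finite) (hcard : (intPts (polyhedron W)).ncard = k)
    (hS : ∀ g ∈ S, ∃ y ∈ intPts (polyhedron (W.erase g)), y ∉ intPts (polyhedron W)) :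
    S.card ≤ c := by
  obtain ⟨W', hW', hcardW', heq⟩ := hellyBound_iff.1 hc W hfin hcard
  refine (Finset.card_le_card fun g hg => ?_).trans hcardW'
  by_contra hgW'
  obtain ⟨y, hy, hyW⟩ := hS g hg
  exact hyW (heq ▸ intPts_mono (polyhedron_anti (Finset.subset_erase.2 ⟨hW', hgW'⟩)) hy)

lemma exists_pos_mul_le {α : Type*} {G : Set α} (hG : G.Finite) (f : α → ℝ) {δ : ℝ}
    (hδ : 0 < δ) : ∃ ε > 0, ∀ x ∈ G, ε * f x ≤ δ := by
  obtain ⟨M, hM⟩ := (hG.image f).bddAbove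
  have hM1 : 0 < max M 1 := lt_max_of_lt_right one_pos
  refine ⟨δ / max M 1, by positivity, fun x hx => ?_⟩
  calc δ / max M 1 * f x ≤ δ / max M 1 * max M 1 :=
        mul_le_mul_of_nonneg_left ((hM (Set.mem_image_of_mem f hx)).trans (le_max_left _ _))
          (by positivity)
    _ = δ := div_mul_cancel₀ _ hM1.ne'

/-- Tilting the face `a ⬝ᵥ x = a ⬝ᵥ z` towards `z` keeps, on that face, only the lattice point
`z` of largest norm. -/
lemma intPts_insert_tilt {H₀ : Finset (Ineq n)} {a z : Fin n → ℝ} {ε : ℝ}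
    (hz : z ∈ intPts (polyhedron H₀))
    (hmax : ∀ x ∈ intPts (polyhedron H₀), a ⬝ᵥ x = a ⬝ᵥ z → x ⬝ᵥ x ≤ z ⬝ᵥ z) (hε : 0 < ε) :
    intPts (polyhedron (insert (a, a ⬝ᵥ z) (insert (a - ε • z, a ⬝ᵥ z - ε * (z ⬝ᵥ z)) H₀))) =
      insert z {x ∈ intPts (polyhedron H₀) |
        a ⬝ᵥ x < a ⬝ᵥ z ∧ ε * (z ⬝ᵥ z - z ⬝ᵥ x) ≤ a ⬝ᵥ z - a ⬝ᵥ x} := by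
  rw [intPts_polyhedron_insert, intPts_polyhedron_insert]
  ext x
  simp only [Set.mem_ofPred_eq, Set.mem_insert_iff, sub_dotProduct, smul_dotProduct, smul_eq_mul]
  constructor
  · rintro ⟨⟨hx, htilt⟩, hle⟩
    rcases hle.lt_or_eq with hlt | heq
    · exact Or.inr ⟨hx, hlt, by linarith⟩
    · refine Or.inl (by_contra fun hne => ?_)
      have hfar := dotProduct_le_of_farthest (y := 0) hx.2 hz.2 hne (by simpa using hmax x hx heq)
      rw [sub_zero] at hfar
      have : ε * (z ⬝ᵥ z) ≤ ε * (z ⬝ᵥ x) := by linarith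
      linarith [le_of_mul_le_mul_left this hε]
  · rintro (rfl | ⟨hx, hlt, htilt⟩)
    · exact ⟨⟨hz, le_rfl⟩, le_rfl⟩
    · exact ⟨⟨hx, by linarith⟩, hlt.le⟩

lemma exists_min_dotProduct_max_norm {S : Set (Fin n → ℝ)} (hS : S.Finite) (hne : S.Nonempty)
    (a : Fin n → ℝ) :
    ∃ z ∈ S, ∀ x ∈ S, a ⬝ᵥ z < a ⬝ᵥ x ∨ a ⬝ᵥ z = a ⬝ᵥ x ∧ x ⬝ᵥ x ≤ z ⬝ᵥ z := by
  obtain ⟨z, hz, hmin⟩ := S.exists_min_image (fun x => toLex (a ⬝ᵥ x, -(x ⬝ᵥ x))) hS hne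
  exact ⟨z, hz, fun x hx => by simpa using Prod.Lex.toLex_le_toLex.1 (hmin x hx)⟩

/-- Take `z` minimising `i.1 ⬝ᵥ ·`, and then maximising the norm, among the lattice points of a
bounding box that satisfy `K \ {i}` but not `i`; the face through `z` and its tilt cut out `z`. -/
lemma exists_extension_insert_point {K : Finset (Ineq n)} {i : Ineq n} (hi : i ∈ K)
    (hfin : (intPts (polyhedron K)).Finite) {Y : Set (Fin n → ℝ)} (hY : Y.Finite)
    (hYi : ∀ y ∈ Y, i.1 ⬝ᵥ y ≤ i.2) {y₀ : Fin n → ℝ} (hy₀ : y₀ ∈ intPts (polyhedron (K.erase i)))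
    (hy₀i : i.2 < i.1 ⬝ᵥ y₀) :
    ∃ E : Finset (Ineq n), ∃ z ∉ intPts (polyhedron K),
      intPts (polyhedron (E ∪ K.erase i)) = insert z (intPts (polyhedron K)) ∧
      ∀ y ∈ Y, y ∈ polyhedron E := by
  classical
  set F := intPts (polyhedron K)
  have hG : (insert y₀ (F ∪ Y)).Finite := (hfin.union hY).insert y₀
  obtain ⟨C, hC⟩ := hG.isBounded.exists_norm_le
  set box := boxIneqs (n := n) (fun _ => -C) fun _ => C
  have hbox : ∀ x ∈ insert y₀ (F ∪ Y), x ∈ polyhedron box := fun x hx =>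
    mem_polyhedron_boxIneqs.2 fun l => abs_le.1 ((norm_le_pi_norm x l).trans (hC x hx))
  set H₀ := box ∪ K.erase i
  have hF : F = {x ∈ intPts (polyhedron H₀) | i.1 ⬝ᵥ x ≤ i.2} := by
    ext x
    refine ⟨fun hx => ⟨⟨mem_polyhedron_union.2 ⟨hbox x (.inr (.inl hx)),
      polyhedron_anti (K.erase_subset i) hx.1⟩, hx.2⟩, hx.1 i hi⟩, fun ⟨⟨hx, hxlat⟩, hxi⟩ => ?_⟩
    refine ⟨by_contra fun hxK => ?_, hxlat⟩
    exact (lt_of_mem_polyhedron_erase (mem_polyhedron_union.1 hx).2 hxK).not_ge hxi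
  set S := {x ∈ intPts (polyhedron H₀) | i.2 < i.1 ⬝ᵥ x}
  have hSfin : S.Finite := (finite_lat_inter_box C).subset fun x hx =>
    ⟨hx.1.2, fun l => abs_le.2 (mem_polyhedron_boxIneqs.1 (mem_polyhedron_union.1 hx.1.1).1 l)⟩
  have hy₀S : y₀ ∈ S :=
    ⟨⟨mem_polyhedron_union.2 ⟨hbox _ (.inl rfl), hy₀.1⟩, hy₀.2⟩, hy₀i⟩
  obtain ⟨z, hzS, hzmin⟩ := exists_min_dotProduct_max_norm hSfin ⟨_, hy₀S⟩ i.1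
  obtain ⟨ε, hε, hεG⟩ := exists_pos_mul_le hG (fun x => z ⬝ᵥ z - z ⬝ᵥ x) (sub_pos.2 hzS.2)
  refine ⟨insert (i.1, i.1 ⬝ᵥ z) (insert (i.1 - ε • z, i.1 ⬝ᵥ z - ε * (z ⬝ᵥ z)) box), z,
    fun hz => (hF ▸ hz).2.not_gt hzS.2, ?_, fun y hy => ?_⟩
  · rw [Finset.insert_union, Finset.insert_union, intPts_insert_tilt hzS.1 (fun x hx heq => ?_) hε,
      hF]
    · congr 1
      ext x
      refine ⟨fun ⟨hx, hlt, _⟩ => ⟨hx, not_lt.1 fun hxi => ?_⟩, fun ⟨hx, hxi⟩ =>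
        ⟨hx, hxi.trans_lt hzS.2, ?_⟩⟩
      · rcases hzmin x ⟨hx, hxi⟩ with h | h
        · linarith
        · linarith [h.1]
      · linarith [hεG x (.inr (.inl (hF ▸ ⟨hx, hxi⟩)))]
    · rcases hzmin x ⟨hx, heq ▸ hzS.2⟩ with h | h
      · linarith
      · exact h.2
  · have hyG : y ∈ insert y₀ (F ∪ Y) := .inr (.inr hy)
    refine mem_polyhedron_insert.2 ⟨(hYi y hy).trans hzS.2.le,
      mem_polyhedron_insert.2 ⟨?_, hbox y hyG⟩⟩
    rw [sub_dotProduct, smul_dotProduct, smul_eq_mul]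
    linarith [hεG y hyG, hYi y hy]

-- A witness for `g ∈ K \ {i}` satisfies the new rows, so `g` stays essential.
lemma card_sub_one_le (hc : HellyBound n k c) (hk : 1 ≤ k) {K : Finset (Ineq n)}
    (hfin : (intPts (polyhedron K)).Finite) (hcard : (intPts (polyhedron K)).ncard = k - 1)
    (hK : Irredundant K) : K.card - 1 ≤ c := by
  classical
  obtain rfl | ⟨i, hi⟩ := K.eq_empty_or_nonempty
  · simp
  choose! y hy hyviol using hK
  obtain ⟨E, z, hzF, hW, hE⟩ := exists_extension_insert_point hi hfin ((K.erase i).finite_toSet.image y)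
    (by
      rintro _ ⟨g, hg, rfl⟩
      exact (hy g (K.mem_of_mem_erase hg)).1 i
        (Finset.mem_erase.2 ⟨(K.ne_of_mem_erase hg).symm, hi⟩))
    (hy i hi) (hyviol i hi)
  have hz : z ∈ polyhedron (K.erase i) :=
    (mem_polyhedron_union.1 (hW ▸ Set.mem_insert z _ : z ∈ intPts _).1).2
  refine (Finset.card_erase_of_mem hi).symm.trans_le (hc.card_le_of_forall_essential
    (hW ▸ hfin.insert z) (by rw [hW, Set.ncard_insert_of_notMem hzF hfin, hcard]; omega)
    fun g hg => ⟨y g, ⟨?_, (hy g (K.mem_of_mem_erase hg)).2⟩, ?_⟩)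
  · refine polyhedron_anti (fun h hh => ?_)
      (mem_polyhedron_union.2 ⟨hE _ ⟨g, hg, rfl⟩, (hy g (K.mem_of_mem_erase hg)).1⟩)
    simp only [Finset.mem_erase, Finset.mem_union] at hh ⊢
    tauto
  · rw [hW]
    rintro (heq | hyF)
    · exact (hyviol g (K.mem_of_mem_erase hg)).not_ge (heq ▸ hz g hg)
    · exact (hyviol g (K.mem_of_mem_erase hg)).not_ge (hyF.1 g (K.mem_of_mem_erase hg))

lemma le_of_not_hellyBound (hc : HellyBound n k c) (hk : 1 ≤ k) {s : ℕ}
    (hs : ¬ HellyBound n (k - 1) s) : s ≤ c := by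
  rw [hellyBound_iff] at hs
  push Not at hs
  obtain ⟨H, hfin, hcard, hlarge⟩ := hs
  obtain ⟨K, hKH, hK, hirr⟩ := exists_irredundant_subset H
  have := hc.card_sub_one_le hk (hK ▸ hfin) (hK ▸ hcard) hirr
  have : s < K.card := not_le.1 fun h => hlarge K hKH h hK
  omega

end HellyBound

theorem stmt11_general (n k : ℕ) (hk : 1 ≤ k) :
    cnk n (k - 1) - 1 ≤ cnk n k := by
  obtain hr | hr := Nat.eq_zero_or_pos (cnk n (k - 1))
  · omega
  have hprev : HellyBound n (k - 1) (cnk n (k - 1)) :=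
    Nat.sInf_mem (Nat.nonempty_of_pos_sInf hr)
  have hbound : ∃ c, HellyBound n k c := by
    obtain rfl | hk2 := hk.eq_or_lt
    · exact ⟨_, hprev.one_of_zero⟩
    · exact ⟨_, hprev.two_mul_of_pred hk2⟩
  exact HellyBound.le_of_not_hellyBound (Nat.sInf_mem hbound) hk
    (Nat.notMem_of_lt_sInf (Nat.sub_lt hr one_pos))

/-- `c(n,k) ≥ c(n,k−1) − 1`. -/
theorem stmt11 (n k : ℕ) (hn : 1 ≤ n) (hk : 1 ≤ k) :
    cnk n (k - 1) - 1 ≤ cnk n k :=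
  stmt11_general n k hk
end
end

section
/- For every fixed integer n ≥ 2 there exists a constant C > 0 such that for every integer s ≥ 1, μ_c(n,s) ≤ C · s^{(n+1)/(n−1)}. Consequently, there exists a constant C' > 0 such that s_{n,k} := min{s : μ_c(n,s) ≥ k} satisfies s_{n,k} ≥ C' · k^{(n−1)/(n+1)} for all k ≥ 1. -/
open Pointwise

noncomputable section

/-! The points `(a, |a|²)` with `a` in the grid `{0, …, g-1}^d` lie on the paraboloid
`x_{d+1} = |x|²` in `ℝ^{d+1}`, so they are in convex position; their number is `g^d`, while
all of their midpoints lie in the half-integer box `½ ({0, …, 2g-1}^d × {0, …, 2dg²})`, which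
has `O(g^{d+2})` points. Choosing `g ≈ s^{1/d}` gives `μ_c(d+1, s) = O(s^{(d+2)/d})`.
Since `μ_c(n, s) ≥ s - 1`, the threshold `s_{n,k}` exists, and inverting the upper bound at
`s = s_{n,k}` gives its lower bound. -/

section ConvexPosition

variable {n : ℕ}

lemma convexPos_of_forall_exists_linearMap_lt {V : Set (Fin n → ℝ)}
    (h : ∀ v ∈ V, ∃ L : (Fin n → ℝ) →ₗ[ℝ] ℝ, ∀ w ∈ V, w ≠ v → L v < L w) : ConvexPos V := by
  intro v hv hmem
  obtain ⟨L, hL⟩ := h v hv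
  have hsub : V \ {v} ⊆ L ⁻¹' Set.Ioi (L v) := fun w ⟨hw, hwv⟩ => hL w hw hwv
  exact lt_irrefl (L v) (convexHull_min hsub ((convex_Ioi _).linear_preimage L) hmem)

lemma ConvexPos.mono {V W : Set (Fin n → ℝ)} (hV : ConvexPos V) (hWV : W ⊆ V) :
    ConvexPos W :=
  fun v hv hmem => hV v (hWV hv) (convexHull_mono (Set.sdiff_subset_sdiff_left hWV) hmem)

lemma half_smul_add_eq_midpoint (x y : Fin n → ℝ) :
    (1 / 2 : ℝ) • (x + y) = midpoint ℝ x y := by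
  rw [midpoint_eq_smul_add, one_div, invOf_eq_inv]

lemma ConvexPos.half_smul_add_notMem {V : Set (Fin n → ℝ)} (hV : ConvexPos V)
    {x y : Fin n → ℝ} (hx : x ∈ V) (hy : y ∈ V) (hxy : x ≠ y) :
    (1 / 2 : ℝ) • (x + y) ∉ V := by
  rw [half_smul_add_eq_midpoint]
  intro hm
  have hx' : x ∈ V \ {midpoint ℝ x y} := ⟨hx, fun h => hxy ((midpoint_eq_left_iff ℝ).1 h.symm)⟩
  have hy' : y ∈ V \ {midpoint ℝ x y} := ⟨hy, fun h => hxy ((midpoint_eq_right_iff ℝ).1 h.symm)⟩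
  exact hV _ hm <| (convex_convexHull ℝ _).segment_subset (subset_convexHull ℝ _ hx')
    (subset_convexHull ℝ _ hy') (midpoint_mem_segment x y)

lemma midpts_subset_midpts {V W : Set (Fin n → ℝ)} (hV : ConvexPos V) (hWV : W ⊆ V) :
    midpts W ⊆ midpts V := by
  rintro _ ⟨⟨x, hx, y, hy, rfl⟩, hnotW⟩
  refine ⟨⟨x, hWV hx, y, hWV hy, rfl⟩, ?_⟩
  rcases eq_or_ne x y with rfl | hxy
  · rw [half_smul_add_eq_midpoint, midpoint_self] at hnotW ⊢
    exact absurd hx hnotW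
  · exact hV.half_smul_add_notMem (hWV hx) (hWV hy) hxy

lemma Set.Finite.midpts {V : Set (Fin n → ℝ)} (hfin : V.Finite) : (midpts V).Finite := by
  refine (hfin.image2 (fun x y => (1 / 2 : ℝ) • (x + y)) hfin).subset ?_
  rintro _ ⟨⟨x, hx, y, hy, rfl⟩, -⟩
  exact Set.mem_image2_of_mem hx hy

lemma ConvexPos.ncard_sub_one_le_ncard_midpts {V : Set (Fin n → ℝ)} (hV : ConvexPos V)
    (hfin : V.Finite) : V.ncard - 1 ≤ (midpts V).ncard := by
  rcases V.eq_empty_or_nonempty with rfl | ⟨v, hv⟩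
  · simp
  set f : (Fin n → ℝ) → (Fin n → ℝ) := fun w => (1 / 2 : ℝ) • (v + w)
  have hf : Set.InjOn f (V \ {v}) := fun w₁ _ w₂ _ h =>
    add_left_cancel (smul_right_injective _ (by norm_num : (1 / 2 : ℝ) ≠ 0) h)
  have hsub : f '' (V \ {v}) ⊆ midpts V := by
    rintro _ ⟨w, ⟨hw, hwv⟩, rfl⟩
    exact ⟨⟨v, hv, w, hw, rfl⟩, hV.half_smul_add_notMem hv hw (Ne.symm hwv)⟩
  calc V.ncard - 1 = (f '' (V \ {v})).ncard := by
        rw [hf.ncard_image, Set.ncard_sdiff_singleton_of_mem hv]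
    _ ≤ (midpts V).ncard := Set.ncard_le_ncard hsub hfin.midpts

lemma muc_ncard_le {V : Set (Fin n → ℝ)} (hV : ConvexPos V) (hfin : V.Finite) :
    muc n V.ncard ≤ (midpts V).ncard :=
  Nat.sInf_le ⟨V, hV, hfin, rfl, rfl⟩

lemma sub_one_le_muc {s : ℕ} (h : ∃ V : Set (Fin n → ℝ), ConvexPos V ∧ V.Finite ∧ V.ncard = s) :
    s - 1 ≤ muc n s := by
  obtain ⟨V, hV, hfin, rfl⟩ := h
  obtain ⟨W, hW, hWfin, hWcard, hmuc⟩ :=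
    Nat.sInf_mem (s := {m | ∃ W : Set (Fin n → ℝ), ConvexPos W ∧ W.Finite ∧
      W.ncard = V.ncard ∧ (midpts W).ncard = m}) ⟨_, V, hV, hfin, rfl, rfl⟩
  rw [muc, ← hmuc, ← hWcard]
  exact hW.ncard_sub_one_le_ncard_midpts hWfin

end ConvexPosition

section Paraboloid

variable {d : ℕ}

def paraboloidLift (a : Fin d → ℝ) : Fin (d + 1) → ℝ :=
  Fin.snoc a (∑ i, a i ^ 2)

lemma paraboloidLift_injective : Function.Injective (paraboloidLift (d := d)) := by
  intro a b h
  funext i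
  simpa [paraboloidLift] using congrFun h i.castSucc

/-- The functional `x ↦ x_{d+1} - 2⟪a, x⟫` takes the value `|b - a|² - |a|²` at the lift of
`b`, so it exposes the lift of `a`. -/
lemma convexPos_of_subset_range_paraboloidLift {V : Set (Fin (d + 1) → ℝ)}
    (hV : V ⊆ Set.range paraboloidLift) : ConvexPos V := by
  refine convexPos_of_forall_exists_linearMap_lt fun v hv => ?_
  obtain ⟨a, rfl⟩ := hV hv
  let L : (Fin (d + 1) → ℝ) →ₗ[ℝ] ℝ :=
    LinearMap.proj (Fin.last d) - ∑ i, (2 * a i) • LinearMap.proj i.castSucc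
  have hL : ∀ b, L (paraboloidLift b) = ∑ i, (b i - a i) ^ 2 - ∑ i, a i ^ 2 := by
    intro b
    simp only [L, paraboloidLift, LinearMap.sub_apply, LinearMap.coe_proj, Function.eval,
      LinearMap.coe_sum, LinearMap.coe_smul, Finset.sum_apply, Pi.smul_apply, smul_eq_mul,
      Fin.snoc_last, Fin.snoc_castSucc, ← Finset.sum_sub_distrib]
    exact Finset.sum_congr rfl fun i _ => by ring
  refine ⟨L, ?_⟩
  rintro _ hw hne
  obtain ⟨b, rfl⟩ := hV hw
  obtain ⟨i, hi⟩ := Function.ne_iff.1 (fun h : b = a => hne (congrArg paraboloidLift h))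
  have hpos : 0 < ∑ i, (b i - a i) ^ 2 :=
    Finset.sum_pos' (fun j _ => sq_nonneg _) ⟨i, Finset.mem_univ _, by
      have := sub_ne_zero.2 hi; positivity⟩
  rw [hL, hL]
  simpa using hpos

def liftedGrid (d g : ℕ) : Finset (Fin (d + 1) → ℝ) :=
  (Fintype.piFinset fun _ : Fin d => Finset.range g).image
    fun a => paraboloidLift fun i => (a i : ℝ)

lemma card_liftedGrid (d g : ℕ) : (liftedGrid d g).card = g ^ d := by
  rw [liftedGrid, Finset.card_image_of_injective, Fintype.card_piFinset]
  · simp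
  · intro a b h
    funext i
    exact_mod_cast congrFun (paraboloidLift_injective h) i

lemma convexPos_liftedGrid (d g : ℕ) : ConvexPos (liftedGrid d g : Set (Fin (d + 1) → ℝ)) := by
  refine convexPos_of_subset_range_paraboloidLift fun x hx => ?_
  obtain ⟨a, -, rfl⟩ := Finset.mem_image.1 hx
  exact ⟨_, rfl⟩

lemma half_smul_paraboloidLift_add (a b : Fin d → ℕ) :
    (1 / 2 : ℝ) • (paraboloidLift (fun i => (a i : ℝ)) + paraboloidLift fun i => (b i : ℝ)) =
      (1 / 2 : ℝ) • Fin.snoc (fun i => ((a i + b i : ℕ) : ℝ))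
        ((∑ i, (a i ^ 2 + b i ^ 2) : ℕ) : ℝ) := by
  congr 1
  funext j
  refine Fin.lastCases ?_ (fun i => ?_) j
  · simp [paraboloidLift, Finset.sum_add_distrib]
  · simp [paraboloidLift]

lemma ncard_midpts_liftedGrid_le (d g : ℕ) :
    (midpts (liftedGrid d g : Set (Fin (d + 1) → ℝ))).ncard ≤ (2 * g) ^ d * (2 * d * g ^ 2 + 1) := by
  let box : Finset (Fin (d + 1) → ℝ) :=
    Finset.image₂ (fun (y : Fin d → ℕ) (t : ℕ) =>
        (1 / 2 : ℝ) • (Fin.snoc (fun i => (y i : ℝ)) (t : ℝ) : Fin (d + 1) → ℝ))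
      (Fintype.piFinset fun _ => Finset.range (2 * g)) (Finset.range (2 * d * g ^ 2 + 1))
  have hsub : midpts (liftedGrid d g : Set (Fin (d + 1) → ℝ)) ⊆ box := by
    rintro _ ⟨⟨x, hx, y, hy, rfl⟩, -⟩
    obtain ⟨a, ha, rfl⟩ := Finset.mem_image.1 hx
    obtain ⟨b, hb, rfl⟩ := Finset.mem_image.1 hy
    simp only [Fintype.mem_piFinset, Finset.mem_range] at ha hb
    refine Finset.mem_image₂.2 ⟨_, ?_, _, ?_, (half_smul_paraboloidLift_add a b).symm⟩
    · simp only [Fintype.mem_piFinset, Finset.mem_range]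
      intro i
      linarith [ha i, hb i]
    · rw [Finset.mem_range, Nat.lt_succ_iff]
      calc ∑ i, (a i ^ 2 + b i ^ 2) ≤ ∑ _i : Fin d, (g ^ 2 + g ^ 2) :=
            Finset.sum_le_sum fun i _ =>
              add_le_add (Nat.pow_le_pow_left (ha i).le 2) (Nat.pow_le_pow_left (hb i).le 2)
        _ = 2 * d * g ^ 2 := by simp; ring
  calc _ ≤ (box : Set (Fin (d + 1) → ℝ)).ncard := Set.ncard_le_ncard hsub box.finite_toSet
    _ ≤ _ := by
      rw [Set.ncard_coe_finset]
      refine (Finset.card_image₂_le _ _ _).trans_eq ?_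
      simp

end Paraboloid

lemma exists_le_pow_and_le_two_mul_rpow {d : ℕ} (hd : 1 ≤ d) (s : ℕ) :
    ∃ g : ℕ, s ≤ g ^ d ∧ (g : ℝ) ≤ 2 * (s : ℝ) ^ (d : ℝ)⁻¹ := by
  rcases Nat.eq_zero_or_pos s with rfl | hs
  · exact ⟨0, Nat.zero_le _, by rw [Nat.cast_zero]; positivity⟩
  set r := (s : ℝ) ^ (d : ℝ)⁻¹
  have hr : 1 ≤ r := Real.one_le_rpow (by exact_mod_cast hs) (by positivity)
  refine ⟨⌈r⌉₊, ?_, ?_⟩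
  · have : (s : ℝ) ≤ (⌈r⌉₊ : ℝ) ^ d := by
      rw [← Real.rpow_inv_natCast_pow (Nat.cast_nonneg s) (by omega : d ≠ 0)]
      exact pow_le_pow_left₀ (by positivity) (Nat.le_ceil r) d
    exact_mod_cast this
  · linarith [Nat.ceil_lt_add_one (by linarith : (0 : ℝ) ≤ r)]

lemma exists_convexPos_ncard_eq_ncard_midpts_le {d : ℕ} (hd : 1 ≤ d) (s : ℕ) :
    ∃ V : Set (Fin (d + 1) → ℝ), ConvexPos V ∧ V.Finite ∧ V.ncard = s ∧
      ((midpts V).ncard : ℝ) ≤ 3 * d * 4 ^ (d + 2) * (s : ℝ) ^ (((d : ℝ) + 2) / d) := by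
  obtain ⟨g, hsg, hg⟩ := exists_le_pow_and_le_two_mul_rpow hd s
  obtain ⟨W, hW, hWcard⟩ := Finset.exists_subset_card_eq ((card_liftedGrid d g).symm ▸ hsg)
  refine ⟨W, (convexPos_liftedGrid d g).mono hW, W.finite_toSet, by simpa using hWcard, ?_⟩
  have hcount : (midpts (W : Set (Fin (d + 1) → ℝ))).ncard ≤ (2 * g) ^ d * (2 * d * g ^ 2 + 1) :=
    (Set.ncard_le_ncard (midpts_subset_midpts (convexPos_liftedGrid d g) (by exact_mod_cast hW))
      (liftedGrid d g).finite_toSet.midpts).trans (ncard_midpts_liftedGrid_le d g)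
  have hbox : (2 * g) ^ d * (2 * d * g ^ 2 + 1) ≤ 3 * d * (2 * g) ^ (d + 2) := by
    rcases Nat.eq_zero_or_pos g with rfl | hg0
    · simp [Nat.pos_iff_ne_zero.1 hd]
    · have : 2 * d * g ^ 2 + 1 ≤ 3 * d * g ^ 2 := by nlinarith [Nat.one_le_pow 2 g hg0]
      calc _ ≤ (2 * g) ^ d * (3 * d * g ^ 2) := Nat.mul_le_mul_left _ this
        _ ≤ (2 * g) ^ d * (3 * d * (2 * g) ^ 2) := by gcongr; omega
        _ = 3 * d * (2 * g) ^ (d + 2) := by ring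
  have hpow : ((s : ℝ) ^ (d : ℝ)⁻¹) ^ (d + 2) = (s : ℝ) ^ (((d : ℝ) + 2) / d) := by
    rw [← Real.rpow_natCast, ← Real.rpow_mul (Nat.cast_nonneg s)]
    congr 1
    push_cast
    ring
  calc ((midpts (W : Set (Fin (d + 1) → ℝ))).ncard : ℝ) ≤ 3 * d * (2 * g) ^ (d + 2) := by
        exact_mod_cast hcount.trans hbox
    _ ≤ 3 * d * (4 * (s : ℝ) ^ (d : ℝ)⁻¹) ^ (d + 2) := by gcongr 3 * d * ?_ ^ _; linarith
    _ = _ := by rw [mul_pow, hpow]; ring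

lemma muc_succ_le {d : ℕ} (hd : 1 ≤ d) (s : ℕ) :
    (muc (d + 1) s : ℝ) ≤ 3 * d * 4 ^ (d + 2) * (s : ℝ) ^ (((d : ℝ) + 2) / d) := by
  obtain ⟨V, hV, hfin, rfl, hmid⟩ := exists_convexPos_ncard_eq_ncard_midpts_le hd s
  exact le_trans (by exact_mod_cast muc_ncard_le hV hfin) hmid

lemma inv_rpow_inv_mul_rpow_inv_le_sInf {f : ℕ → ℕ} {C e : ℝ} (hC : 0 < C) (he : 0 < e)
    (hf : ∀ s, (f s : ℝ) ≤ C * (s : ℝ) ^ e) {k : ℕ} (hk : ∃ s, k ≤ f s) :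
    (C ^ e⁻¹)⁻¹ * (k : ℝ) ^ e⁻¹ ≤ (sInf {s | k ≤ f s} : ℕ) := by
  set s₀ := sInf {s | k ≤ f s}
  have hks : (k : ℝ) ≤ C * (s₀ : ℝ) ^ e := le_trans (by exact_mod_cast Nat.sInf_mem hk) (hf s₀)
  have hroot : (k : ℝ) ^ e⁻¹ ≤ C ^ e⁻¹ * s₀ := by
    calc (k : ℝ) ^ e⁻¹ ≤ (C * (s₀ : ℝ) ^ e) ^ e⁻¹ := by gcongr
      _ = C ^ e⁻¹ * s₀ := by
        rw [Real.mul_rpow hC.le (by positivity), ← Real.rpow_mul (Nat.cast_nonneg _),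
          mul_inv_cancel₀ he.ne', Real.rpow_one]
  rw [inv_mul_le_iff₀ (by positivity)]
  exact hroot

/-- For fixed `n ≥ 2` there is `C > 0` with
`μ_c(n,s) ≤ C·s^{(n+1)/(n−1)}` for all `s ≥ 1`; consequently there is
`C' > 0` with `s_{n,k} ≥ C'·k^{(n−1)/(n+1)}` for all `k ≥ 1`, where
`s_{n,k} = min {s : μ_c(n,s) ≥ k}`. -/
theorem stmt15 (n : ℕ) (hn : 2 ≤ n) :
    (∃ C : ℝ, 0 < C ∧ ∀ s : ℕ, 1 ≤ s →
      (muc n s : ℝ) ≤ C * (s : ℝ) ^ (((n : ℝ) + 1) / ((n : ℝ) - 1))) ∧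
    (∃ C' : ℝ, 0 < C' ∧ ∀ k : ℕ, 1 ≤ k →
      C' * (k : ℝ) ^ (((n : ℝ) - 1) / ((n : ℝ) + 1)) ≤
        ((sInf {s | k ≤ muc n s} : ℕ) : ℝ)) := by
  obtain ⟨d, hd, rfl⟩ : ∃ d, 1 ≤ d ∧ n = d + 1 := ⟨n - 1, by omega, by omega⟩
  have hd' : (0 : ℝ) < d := by exact_mod_cast hd
  set e : ℝ := ((d : ℝ) + 2) / d
  have he : (((d + 1 : ℕ) : ℝ) + 1) / (((d + 1 : ℕ) : ℝ) - 1) = e := by push_cast; ring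
  have he' : (((d + 1 : ℕ) : ℝ) - 1) / (((d + 1 : ℕ) : ℝ) + 1) = e⁻¹ := by
    push_cast; rw [inv_div]; ring_nf
  have hC : (0 : ℝ) < 3 * d * 4 ^ (d + 2) := by positivity
  have hunbounded : ∀ k : ℕ, ∃ s, k ≤ muc (d + 1) s := fun k =>
    ⟨k + 1, sub_one_le_muc (Exists.imp (fun V ⟨hV, hfin, hcard, _⟩ => ⟨hV, hfin, hcard⟩)
      (exists_convexPos_ncard_eq_ncard_midpts_le hd (k + 1)))⟩
  rw [he, he']
  exact ⟨⟨_, hC, fun s _ => muc_succ_le hd s⟩,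
    ⟨_, by positivity, fun k _ => inv_rpow_inv_mul_rpow_inv_le_sInf hC (by positivity)
      (muc_succ_le hd) (hunbounded k)⟩⟩
end
end

section
/- Let n ≥ 1, let u ∈ ℝ^n, and let r > √n. Then the convex hull of B_n(u,r) ∩ ℤ^n contains the ball B_n(u, r − √n). -/
open Pointwise

noncomputable section

/-! Every point `x` lies in the convex hull of the vertices of the unit lattice cube
`∏ᵢ [⌊xᵢ⌋, ⌊xᵢ⌋ + 1]`, and each of these lattice points is within distance `√n` of `x`.
So if `x ∈ B(u, r - √n)`, these vertices lie in `B(u, r) ∩ ℤⁿ`. -/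

namespace EuclideanSpace

variable {ι : Type*} [Fintype ι]

theorem mem_convexHull_setOf_forall_eq_or_eq {a b : ι → ℝ} {x : EuclideanSpace ℝ ι}
    (hax : ∀ i, a i ≤ x i) (hxb : ∀ i, x i ≤ b i) :
    x ∈ convexHull ℝ {y : EuclideanSpace ℝ ι | ∀ i, y i = a i ∨ y i = b i} := by
  let e := WithLp.linearEquiv 2 ℝ (ι → ℝ)
  have hpi : e x ∈ convexHull ℝ (Set.univ.pi fun i => {a i, b i}) :=
    mem_convexHull_pi fun i _ => by
      rw [convexHull_pair, segment_eq_Icc ((hax i).trans (hxb i))]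
      exact ⟨hax i, hxb i⟩
  have := Set.mem_image_of_mem e.symm.toLinearMap hpi
  rw [LinearMap.image_convexHull, LinearEquiv.coe_coe, LinearEquiv.image_symm_eq_preimage,
    LinearEquiv.symm_apply_apply] at this
  convert this using 2
  ext y
  simp [e]

theorem dist_le_sqrt_card_mul {x y : EuclideanSpace ℝ ι} {c : ℝ}
    (h : ∀ i, dist (x i) (y i) ≤ c) : dist x y ≤ √(Fintype.card ι) * c := by
  rcases isEmpty_or_nonempty ι with hι | ⟨⟨i₀⟩⟩
  · simp [EuclideanSpace.dist_eq]
  have hc : 0 ≤ c := dist_nonneg.trans (h i₀)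
  calc dist x y = √(∑ i, dist (x i) (y i) ^ 2) := EuclideanSpace.dist_eq x y
    _ ≤ √(∑ _i : ι, c ^ 2) := by gcongr with i; exact h i
    _ = √(Fintype.card ι) * c := by
      rw [Finset.sum_const, Finset.card_univ, nsmul_eq_mul, Real.sqrt_mul (Nat.cast_nonneg _),
        Real.sqrt_sq hc]

end EuclideanSpace

theorem stmt16_general (n : ℕ) (u : EuclideanSpace ℝ (Fin n)) (r : ℝ) :
    Metric.closedBall u (r - Real.sqrt n) ⊆
      convexHull ℝ (Metric.closedBall u r ∩ latE n) := by
  intro x hx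
  refine convexHull_mono ?_ (EuclideanSpace.mem_convexHull_setOf_forall_eq_or_eq
    (fun i => Int.floor_le (x i)) (fun i => (Int.lt_floor_add_one (x i)).le))
  rintro y hy
  have hyx : dist y x ≤ √n := by
    simpa using EuclideanSpace.dist_le_sqrt_card_mul (x := y) (y := x) (c := 1) fun i => by
      rw [Real.dist_eq, abs_le]
      rcases hy i with h | h <;> rw [h] <;>
        constructor <;> linarith [Int.floor_le (x i), Int.lt_floor_add_one (x i)]
  refine ⟨?_, fun i => ?_⟩
  · rw [Metric.mem_closedBall] at hx ⊢
    linarith [dist_triangle y x u]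
  · rcases hy i with h | h
    · exact ⟨⌊x i⌋, h⟩
    · exact ⟨⌊x i⌋ + 1, by rw [h]; push_cast; rfl⟩

/-- For `r > √n`, the convex hull of the integer points of the
Euclidean ball `B_n(u,r)` contains the ball `B_n(u, r − √n)`. -/
theorem stmt16 (n : ℕ) (hn : 1 ≤ n) (u : EuclideanSpace ℝ (Fin n)) (r : ℝ)
    (hr : Real.sqrt n < r) :
    Metric.closedBall u (r - Real.sqrt n) ⊆
      convexHull ℝ (Metric.closedBall u r ∩ latE n) :=
  stmt16_general n u r
end
end

section
/- For every n ≥ 1, the set U of vectors u ∈ ℝ^n with the property that for every r > 0 the boundary of the ball B_n(r·u, r) contains at most one integer point (i.e., |{x ∈ ℤ^n : ‖x − r·u‖ = r}| ≤ 1 for all r > 0) is dense in ℝ^n. -/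
open Pointwise

noncomputable section

/-!
If distinct points `X, Y` lie on the sphere of centre `r • u` and radius `r`, subtracting the two
sphere equations gives `‖X‖² - ‖Y‖² = 2 r ⟪X - Y, u⟫`, and substituting back eliminates `r`:
`‖L u‖ = |‖X‖² - ‖Y‖²|` for the linear map `L u = (‖X‖² - ‖Y‖²) u - 2 ⟪X - Y, u⟫ X`, which is
nonzero because `⟪L (X - Y), X - Y⟫ = -‖X - Y‖⁴`. By the parallelogram law a level set of
`u ↦ ‖L u‖` contains no segment centred at one of its points, so it has empty interior. Hence for
each of the countably many pairs of lattice points the admissible `u` contain a dense open set,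
and Baire's theorem concludes.
-/

open scoped RealInnerProductSpace

theorem interior_setOf_norm_apply_eq_eq_empty {E F : Type*} [AddCommGroup E] [Module ℝ E]
    [TopologicalSpace E] [ContinuousAdd E] [ContinuousSMul ℝ E]
    [NormedAddCommGroup F] [InnerProductSpace ℝ F] {L : E →L[ℝ] F} (hL : L ≠ 0) (c : ℝ) :
    interior {u | ‖L u‖ = c} = ∅ := by
  obtain ⟨v, hv⟩ : ∃ v, L v ≠ 0 := by
    by_contra! h
    exact hL (ContinuousLinearMap.ext h)
  refine Set.eq_empty_of_forall_notMem fun u hu => ?_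
  have hline : Continuous fun t : ℝ => u + t • v := by fun_prop
  obtain ⟨δ, hδ, hball⟩ := Metric.isOpen_iff.1 (isOpen_interior.preimage hline) 0
    (by simpa using hu)
  have hlevel : ∀ t : ℝ, |t| < δ → ‖L u + t • L v‖ = c := fun t ht =>
    by simpa using interior_subset (hball (by simpa using ht))
  have hδ2 : |δ / 2| < δ := by rw [abs_of_pos (half_pos hδ)]; linarith
  have hcenter : ‖L u‖ = c := by simpa using hlevel 0 (by simpa using hδ)
  have hminus : ‖L u - (δ / 2) • L v‖ = c := by
    simpa [sub_eq_add_neg] using hlevel (-(δ / 2)) (by rwa [abs_neg])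
  have hpar := parallelogram_law_with_norm ℝ (L u) ((δ / 2) • L v)
  rw [hlevel _ hδ2, hminus, hcenter] at hpar
  have : ‖(δ / 2) • L v‖ = 0 := by nlinarith [norm_nonneg ((δ / 2) • L v)]
  simp [hδ.ne', hv] at this

theorem dense_setOf_norm_apply_ne {E F : Type*} [AddCommGroup E] [Module ℝ E]
    [TopologicalSpace E] [ContinuousAdd E] [ContinuousSMul ℝ E]
    [NormedAddCommGroup F] [InnerProductSpace ℝ F] {L : E →L[ℝ] F} (hL : L ≠ 0) (c : ℝ) :
    Dense {u | ‖L u‖ ≠ c} :=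
  interior_eq_empty_iff_dense_compl.1 (interior_setOf_norm_apply_eq_eq_empty hL c)

section SphereThroughPair

variable {F : Type*} [NormedAddCommGroup F] [InnerProductSpace ℝ F]

def sphereElim (X Y : F) : F →L[ℝ] F :=
  (‖X‖ ^ 2 - ‖Y‖ ^ 2) • ContinuousLinearMap.id ℝ F - (innerSL ℝ (X - Y)).smulRight ((2 : ℝ) • X)

theorem sphereElim_apply (X Y u : F) :
    sphereElim X Y u = (‖X‖ ^ 2 - ‖Y‖ ^ 2) • u - (2 * ⟪X - Y, u⟫) • X := by
  simp [sphereElim, smul_smul, mul_comm, inner_sub_left]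

theorem inner_sphereElim_sub_self (X Y : F) :
    ⟪sphereElim X Y (X - Y), X - Y⟫ = -‖X - Y‖ ^ 4 := by
  rw [show ‖X - Y‖ ^ 4 = (‖X - Y‖ ^ 2) ^ 2 by ring, sphereElim_apply, inner_sub_left,
    real_inner_smul_left, real_inner_smul_left,
    real_inner_self_eq_norm_sq, norm_sub_sq_real, inner_sub_right, real_inner_self_eq_norm_sq]
  ring

theorem sphereElim_ne_zero {X Y : F} (h : X ≠ Y) : sphereElim X Y ≠ 0 := by
  intro h0
  have := inner_sphereElim_sub_self X Y
  simp [h0, eq_comm (a := (0 : ℝ)), sub_eq_zero] at this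
  exact h this

theorem norm_sphereElim_eq_of_mem_sphere {X Y u : F} {r : ℝ}
    (hX : X ∈ Metric.sphere (r • u) r) (hY : Y ∈ Metric.sphere (r • u) r) :
    ‖sphereElim X Y u‖ = |‖X‖ ^ 2 - ‖Y‖ ^ 2| := by
  have hr : 0 ≤ r := hX.symm ▸ dist_nonneg
  have sphere_eq : ∀ Z ∈ Metric.sphere (r • u) r,
      ‖Z‖ ^ 2 - 2 * r * ⟪Z, u⟫ + r ^ 2 * ‖u‖ ^ 2 = r ^ 2 := by
    intro Z hZ
    rw [Metric.mem_sphere, dist_eq_norm] at hZ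
    have := norm_sub_sq_real Z (r • u)
    rw [hZ, real_inner_smul_right, norm_smul, Real.norm_eq_abs, mul_pow, sq_abs] at this
    linarith
  have hdiff : ‖X‖ ^ 2 - ‖Y‖ ^ 2 = 2 * r * ⟪X - Y, u⟫ := by
    rw [inner_sub_left]; linarith [sphere_eq X hX, sphere_eq Y hY]
  have hL : sphereElim X Y u = (2 * ⟪X - Y, u⟫) • (r • u - X) := by
    rw [sphereElim_apply, hdiff, smul_sub, smul_smul]; ring_nf
  rw [hL, norm_smul, ← dist_eq_norm', hX, hdiff, Real.norm_eq_abs,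
    show 2 * r * ⟪X - Y, u⟫ = 2 * ⟪X - Y, u⟫ * r by ring, abs_mul (2 * ⟪X - Y, u⟫) r,
    abs_of_nonneg hr]

theorem dense_setOf_forall_subsingleton_inter_sphere [BaireSpace F] {P : Set F}
    (hP : P.Countable) :
    Dense {u : F | ∀ r : ℝ, (P ∩ Metric.sphere (r • u) r).Subsingleton} := by
  set pairs := {p : F × F | p.1 ∈ P ∧ p.2 ∈ P ∧ p.1 ≠ p.2}
  have hpairs : pairs.Countable := (hP.prod hP).mono fun _ hp => Set.mem_prod.2 ⟨hp.1, hp.2.1⟩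
  refine (dense_biInter_of_isOpen
    (f := fun p : F × F => {u | ‖sphereElim p.1 p.2 u‖ ≠ |‖p.1‖ ^ 2 - ‖p.2‖ ^ 2|})
    (fun p _ => isOpen_ne_fun (by fun_prop) continuous_const) hpairs
    (fun p hp => dense_setOf_norm_apply_ne (sphereElim_ne_zero hp.2.2) _)).mono ?_
  rintro u hu r X ⟨hXP, hX⟩ Y ⟨hYP, hY⟩
  by_contra hXY
  exact Set.mem_iInter₂.1 hu (X, Y) ⟨hXP, hYP, hXY⟩ (norm_sphereElim_eq_of_mem_sphere hX hY)

end SphereThroughPair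

theorem countable_latE (n : ℕ) : (latE n).Countable := by
  refine (Set.countable_range fun z : Fin n → ℤ => WithLp.toLp 2 fun j => (z j : ℝ)).mono ?_
  intro x hx
  choose z hz using hx
  exact ⟨z, by ext j; simp [hz]⟩

theorem stmt17_general (n : ℕ) :
    Dense {u : EuclideanSpace ℝ (Fin n) |
      ∀ r : ℝ, 0 < r →
        Set.Subsingleton {x ∈ latE n | dist x (r • u) = r}} := by
  refine (dense_setOf_forall_subsingleton_inter_sphere (countable_latE n)).mono ?_
  exact fun _ hu r _ => hu r

/-- The set of `u ∈ ℝ^n` such that for every `r > 0` the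
boundary of the ball `B_n(r·u, r)` contains at most one integer point is
dense in `ℝ^n`. -/
theorem stmt17 (n : ℕ) (hn : 1 ≤ n) :
    Dense {u : EuclideanSpace ℝ (Fin n) |
      ∀ r : ℝ, 0 < r →
        Set.Subsingleton {x ∈ latE n | dist x (r • u) = r}} :=
  stmt17_general n
end
end

section
/- Let V ⊆ ℝ² be a finite set. If all the points of V are collinear, then |M(V)| ≥ |V| − 1. If the points of V are not all collinear, then |M(V)| ≥ 2|V| − 3. -/
open Pointwise

noncomputable section

/-! Since `v ↦ ½ v` is injective and `V ⊆ ½ (V + V)`, we have `|M(V)| = |V + V| - |V|`, so both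
bounds are statements about sumsets. The collinear bound is the Cauchy–Davenport inequality
`|V + V| ≥ 2|V| - 1` in a torsion-free group. The other is Freiman's `|A + A| ≥ 3|A| - 3` for
non-collinear `A`: order `A` by a linear functional injective on it and remove its largest point
`a`. If the rest `s` is collinear, then `a` lies off its line and `a + (s ∪ {a})` consists of
`|s| + 1` sums outside `s + s`. Otherwise induction applies to `s`, and `a + a`, `a + b` and
`a + c` are three sums outside `s + s`, where `b` is the largest point of `s` and `c` the largest
point of `s` off the line `ab`. -/

open Finset

lemma Finset.exists_dual_injOn {K E : Type*} [Field K] [Infinite K] [AddCommGroup E]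
    [Module K E] (A : Finset E) : ∃ f : Module.Dual K E, Set.InjOn f A := by
  obtain ⟨f, hf⟩ := Module.exists_dual_forall_apply_ne_zero (K := K)
    (fun p : A.offDiag => p.1.1 - p.1.2) fun ⟨_, hp⟩ => sub_ne_zero.2 (mem_offDiag.1 hp).2.2
  refine ⟨f, fun a ha b hb hab => by_contra fun hne => hf ⟨(a, b), mem_offDiag.2 ⟨ha, hb, hne⟩⟩ ?_⟩
  simp [hab]

lemma Collinear.coe_affineSpan {k V P : Type*} [DivisionRing k] [AddCommGroup V] [Module k V]
    [AddTorsor V P] {s : Set P} (h : Collinear k s) : Collinear k (affineSpan k s : Set P) := by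
  rwa [Collinear, ← AffineSubspace.direction, direction_affineSpan]

lemma Finset.nonempty_of_not_collinear_insert {k V P : Type*} [DivisionRing k] [AddCommGroup V]
    [Module k V] [AddTorsor V P] [DecidableEq P] {a : P} {s : Finset P}
    (h : ¬ Collinear k (↑(insert a s) : Set P)) : s.Nonempty :=
  nonempty_iff_ne_empty.2 fun hs => h (by simp [hs, collinear_singleton])

section AffineSubspace

variable {k E : Type*} [Ring k] [AddCommGroup E] [Module k E] {L : AffineSubspace k E}
  {a b c x : E}

lemma AffineSubspace.mem_of_add_eq_add (h : a + x = b + c) (hx : x ∈ L) (hb : b ∈ L)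
    (hc : c ∈ L) : a ∈ L := by
  have ha : a = (b -ᵥ x) +ᵥ c := by
    rw [vsub_eq_sub, vadd_eq_add, ← add_sub_right_comm, ← h, add_sub_cancel_right]
  exact ha ▸ L.vadd_mem_of_mem_direction (L.vsub_mem_direction hb hx) hc

lemma AffineSubspace.mem_of_add_self_eq_add [Invertible (2 : k)] (h : a + a = b + c)
    (hb : b ∈ L) (hc : c ∈ L) : a ∈ L := by
  have ha : a = midpoint k b c := by
    rw [midpoint_eq_smul_add, ← h, ← two_smul k a, smul_smul, invOf_mul_self, one_smul]
  exact ha ▸ AffineMap.lineMap_mem _ hb hc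

end AffineSubspace

lemma Finset.card_add_self_add_card_le_card_insert_add_self {G : Type*} [Add G] [IsLeftCancelAdd G]
    [DecidableEq G] {a : G} {s t : Finset G} (ht : t ⊆ insert a s)
    (hnew : ∀ x ∈ t, a + x ∉ s + s) : #(s + s) + #t ≤ #(insert a s + insert a s) := by
  have hdisj : Disjoint (s + s) (t.image (a + ·)) := by
    simpa [disjoint_right] using hnew
  calc #(s + s) + #t = #((s + s) ∪ t.image (a + ·)) := by
        rw [card_union_of_disjoint hdisj, card_image_of_injective _ (add_right_injective a)]
    _ ≤ #(insert a s + insert a s) := by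
        exact card_le_card (union_subset (add_subset_add (subset_insert a s) (subset_insert a s))
          (image_subset_iff.2 fun x hx => add_mem_add (mem_insert_self a s) (ht hx)))

lemma Finset.card_add_self_add_card_lt_of_notMem_affineSpan {k E : Type*} [Ring k]
    [Invertible (2 : k)] [AddCommGroup E] [Module k E] [DecidableEq E] {a : E} {s : Finset E}
    (ha : a ∉ affineSpan k (s : Set E)) : #(s + s) + #s < #(insert a s + insert a s) := by
  have has : a ∉ s := fun h => ha (subset_affineSpan k _ h)
  rw [← Nat.add_one_le_iff, add_assoc, ← card_insert_of_notMem has]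
  refine card_add_self_add_card_le_card_insert_add_self subset_rfl fun x hx hmem => ha ?_
  obtain ⟨b, hb, c, hc, hbc⟩ := mem_add.1 hmem
  have hb := subset_affineSpan k _ (mem_coe.2 hb)
  have hc := subset_affineSpan k _ (mem_coe.2 hc)
  rcases mem_insert.1 hx with rfl | hx
  · exact AffineSubspace.mem_of_add_self_eq_add hbc.symm hb hc
  · exact AffineSubspace.mem_of_add_eq_add hbc.symm (subset_affineSpan k _ (mem_coe.2 hx)) hb hc

section Freiman

variable {E : Type*} [AddCommGroup E] [Module ℝ E] [DecidableEq E]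

lemma Finset.card_add_self_add_three_le (f : Module.Dual ℝ E) {a : E} {s : Finset E}
    (hmax : ∀ x ∈ s, f x < f a) (hs : ¬ Collinear ℝ (↑(insert a s) : Set E)) :
    #(s + s) + 3 ≤ #(insert a s + insert a s) := by
  classical
  obtain ⟨b, hb, hbmax⟩ := s.exists_max_image f (nonempty_of_not_collinear_insert hs)
  set L := line[ℝ, a, b]
  have haL : a ∈ L := left_mem_affineSpan_pair ℝ a b
  have hbL : b ∈ L := right_mem_affineSpan_pair ℝ a b
  have hoff : (s.filter (· ∉ L)).Nonempty := by
    by_contra! hempty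
    refine hs ((collinear_pair ℝ a b).coe_affineSpan.subset ?_)
    rw [coe_insert, Set.insert_subset_iff]
    refine ⟨haL, fun x hx => ?_⟩
    by_contra hxL
    exact notMem_empty x (hempty ▸ mem_filter.2 ⟨hx, hxL⟩)
  obtain ⟨c, hc, hcmax⟩ := (s.filter (· ∉ L)).exists_max_image f hoff
  obtain ⟨hcs, hcL⟩ := mem_filter.1 hc
  have hab : a ≠ b := fun h => (hmax b hb).ne (h ▸ rfl)
  have hac : a ≠ c := fun h => (hmax c hcs).ne (h ▸ rfl)
  have hbc : b ≠ c := fun h => hcL (h ▸ hbL)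
  have hsum_le : ∀ y ∈ s + s, f y ≤ f b + f b := by
    intro y hy
    obtain ⟨x, hx, z, hz, rfl⟩ := mem_add.1 hy
    rw [map_add]
    exact add_le_add (hbmax x hx) (hbmax z hz)
  rw [← card_eq_three.2 ⟨a, b, c, hab, hac, hbc, rfl⟩]
  refine card_add_self_add_card_le_card_insert_add_self
    (insert_subset_insert a (insert_subset_iff.2 ⟨hb, singleton_subset_iff.2 hcs⟩)) ?_
  simp only [mem_insert, mem_singleton, forall_eq_or_imp, forall_eq]
  refine ⟨fun h => ?_, fun h => ?_, fun h => ?_⟩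
  · linarith [hsum_le _ h, map_add f a a, hmax b hb]
  · linarith [hsum_le _ h, map_add f a b, hmax b hb]
  · -- a summand `x` off `L` would have `f x ≤ f c`, while the other one has `f y < f a`
    obtain ⟨x, hx, y, hy, hxy⟩ := mem_add.1 h
    have hf : f x + f y = f a + f c := by rw [← map_add, ← map_add, hxy]
    have hxL : x ∈ L := by
      by_contra hxL
      linarith [hcmax x (mem_filter.2 ⟨hx, hxL⟩), hmax y hy]
    have hyL : y ∈ L := by
      by_contra hyL
      linarith [hcmax y (mem_filter.2 ⟨hy, hyL⟩), hmax x hx]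
    exact hcL (AffineSubspace.mem_of_add_eq_add (by rw [add_comm, hxy]) haL hxL hyL)

theorem Finset.three_mul_card_sub_three_le_card_add_self {A : Finset E}
    (hA : ¬ Collinear ℝ (A : Set E)) : 3 * #A - 3 ≤ #(A + A) := by
  have : IsAddTorsionFree E := .of_isTorsionFree ℝ E
  obtain ⟨f, hf⟩ := A.exists_dual_injOn (K := ℝ)
  induction A using Finset.induction_on_max_value f with
  | empty => simp
  | insert a s has hmax ih =>
    have hlt : ∀ x ∈ s, f x < f a := fun x hx =>
      (hmax x hx).lt_of_ne fun h => has (hf (mem_insert_of_mem hx) (mem_insert_self a s) h ▸ hx)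
    rw [card_insert_of_notMem has]
    by_cases hcol : Collinear ℝ (s : Set E)
    · have ha : a ∉ affineSpan ℝ (s : Set E) := fun h =>
        hA (by rwa [coe_insert, collinear_insert_iff_of_mem_affineSpan h])
      have hs := nonempty_of_not_collinear_insert hA
      have := cauchy_davenport_of_isAddTorsionFree hs hs
      have := card_add_self_add_card_lt_of_notMem_affineSpan ha
      omega
    · have := ih hcol (hf.mono (coe_subset.2 (subset_insert a s)))
      have := card_add_self_add_three_le f hlt hA
      omega

end Freiman

lemma ncard_midpts {n : ℕ} (A : Finset (Fin n → ℝ)) :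
    (midpts (A : Set (Fin n → ℝ))).ncard = #(A + A) - #A := by
  have hsub : A ⊆ (A + A).image ((1 / 2 : ℝ) • ·) := fun x hx =>
    mem_image.2 ⟨x + x, add_mem_add hx hx, by rw [← two_smul ℝ x, smul_smul]; norm_num⟩
  have hmid : midpts (A : Set (Fin n → ℝ)) = ↑((A + A).image ((1 / 2 : ℝ) • ·) \ A) := by
    ext p
    simp only [midpts, coe_sdiff, coe_image, Set.mem_sdiff, Set.mem_ofPred_eq, Set.mem_image,
      mem_coe, mem_add]
    constructor
    · rintro ⟨⟨x, hx, y, hy, rfl⟩, hp⟩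
      exact ⟨⟨_, ⟨x, hx, y, hy, rfl⟩, rfl⟩, hp⟩
    · rintro ⟨⟨_, ⟨x, hx, y, hy, rfl⟩, rfl⟩, hp⟩
      exact ⟨⟨x, hx, y, hy, rfl⟩, hp⟩
  rw [hmid, Set.ncard_coe_finset, card_sdiff_of_subset hsub,
    card_image_of_injective _ (smul_right_injective _ (by norm_num))]

/-- For a finite `V ⊆ ℝ²`: if `V` is collinear then
`|M(V)| ≥ |V| − 1`; if `V` is not collinear then `|M(V)| ≥ 2|V| − 3`. -/
theorem stmt18 (V : Set (Fin 2 → ℝ)) (hV : V.Finite) :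
    (Collinear ℝ V → V.ncard - 1 ≤ (midpts V).ncard) ∧
    (¬ Collinear ℝ V → 2 * V.ncard - 3 ≤ (midpts V).ncard) := by
  lift V to Finset (Fin 2 → ℝ) using hV
  rw [ncard_midpts, Set.ncard_coe_finset]
  refine ⟨fun _ => ?_, fun hV => ?_⟩
  · obtain rfl | hne := V.eq_empty_or_nonempty
    · simp
    · have := cauchy_davenport_of_isAddTorsionFree hne hne
      omega
  · have := V.three_mul_card_sub_three_le_card_add_self hV
    omega
end
end
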